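/- Let G(R) be a finite connected graph on regular agents R, let S be a set of stubborn agents each connected to all agents of R and all holding the common value a ∈ ℝ. Let x₀^R ∈ ℝ^R with average x̄₀^R, and suppose λ ≥ ‖x₀^R − x̄₀^R·1_R‖_* (dual TV norm on G(R)). Define x* = a if |x̄₀^R − a| ≤ λ|S|; x* = x̄₀^R + λ|S| if x̄₀^R + λ|S| < a; and x* = x̄₀^R − λ|S| if x̄₀^R − λ|S| > a. Then x*·1_R is the unique minimizer over x ∈ ℝ^R of (1/2)‖x − x₀^R‖₂² + λ‖x‖_TV + λ|S|·Σ_{v∈R} |x(v) − a|. -/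

import Mathlib

/-!
Let `F` be the objective, write `x₀ = m • 1 + u` with `∑ u = 0`, and let `T` be the target.
Expanding the square, `F x - F (T • 1) - ½‖x - T • 1‖²` equals `(λ TV x - ⟪x, u⟫)` plus
`∑ᵥ (λk |xᵥ - a| - λk |T - a| - (m - T)(xᵥ - T))`. The first bracket is nonnegative by the
duality bound `⟪x, u⟫ ≤ ‖u‖_* TV x ≤ λ TV x`, and every summand of the second is nonnegative
because `m - T` is a subgradient of `λk |· - a|` at `T` (the target is the soft thresholding
of `m` towards `a`). So `F` grows quadratically away from `T • 1`.
-/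

open Finset

noncomputable section

/-- Discrete total variation. -/
def tvNorm {V : Type*} [Fintype V] (G : SimpleGraph V) [DecidableRel G.Adj]
    (x : V → ℝ) : ℝ :=
  (1 / 2) * ∑ v, ∑ w, if G.Adj v w then |x w - x v| else 0

/-- Dual norm of the TV norm on the zero-mean subspace. -/
def dualNorm {V : Type*} [Fintype V] (G : SimpleGraph V) [DecidableRel G.Adj]
    (u : V → ℝ) : ℝ :=
  sSup {r | ∃ x : V → ℝ, (∑ v, x v = 0) ∧ tvNorm G x ≤ 1 ∧ r = ∑ v, x v * u v}

/-- The perturbed objective seen by regular agents when `k` stubborn agents of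
common value `a` are connected to every regular agent. -/
def stubbornObjective {R : Type*} [Fintype R] (G : SimpleGraph R)
    [DecidableRel G.Adj] (x₀ : R → ℝ) (lam a : ℝ) (k : ℕ) (x : R → ℝ) : ℝ :=
  (1 / 2) * ∑ v, (x v - x₀ v) ^ 2 + lam * tvNorm G x
    + lam * (k : ℝ) * ∑ v, |x v - a|

/-- The consensus value reached in the presence of a stubborn coalition of size
`k` with common value `a`: `a` if `|x̄₀ - a| ≤ λk`, otherwise the projection of
`a` onto `[x̄₀ - λk, x̄₀ + λk]`. -/
def stubbornTarget (xbar lam a : ℝ) (k : ℕ) : ℝ :=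
  if |xbar - a| ≤ lam * (k : ℝ) then a
  else if xbar + lam * (k : ℝ) < a then xbar + lam * (k : ℝ)
  else xbar - lam * (k : ℝ)

lemma sum_sub_mean_eq_zero {V : Type*} [Fintype V] (x : V → ℝ) :
    ∑ v, (x v - (∑ w, x w) / (Fintype.card V : ℝ)) = 0 := by
  rcases isEmpty_or_nonempty V with _ | _
  · simp
  · rw [sum_sub_distrib, sum_const, card_univ, nsmul_eq_mul,
      mul_div_cancel₀ _ (by positivity), sub_self]

section TotalVariation

variable {V : Type*} [Fintype V] (G : SimpleGraph V) [DecidableRel G.Adj]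

lemma tvNorm_nonneg (x : V → ℝ) : 0 ≤ tvNorm G x := by
  unfold tvNorm
  have := sum_nonneg fun v (_ : v ∈ univ) => sum_nonneg fun w (_ : w ∈ univ) =>
    (by split_ifs <;> positivity : (0 : ℝ) ≤ if G.Adj v w then |x w - x v| else 0)
  positivity

lemma tvNorm_const (c : ℝ) : tvNorm G (fun _ : V => c) = 0 := by
  simp [tvNorm]

lemma tvNorm_sub_const (x : V → ℝ) (c : ℝ) :
    tvNorm G (fun v => x v - c) = tvNorm G x := by
  simp only [tvNorm, sub_sub_sub_cancel_right]

lemma tvNorm_const_mul (c : ℝ) (x : V → ℝ) :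
    tvNorm G (fun v => c * x v) = |c| * tvNorm G x := by
  have h (v w : V) : (if G.Adj v w then |c * x w - c * x v| else 0)
      = |c| * (if G.Adj v w then |x w - x v| else 0) := by
    split_ifs
    · rw [← mul_sub, abs_mul]
    · rw [mul_zero]
  simp only [tvNorm, h, ← mul_sum]
  ring

lemma abs_sub_le_tvNorm_of_adj (x : V → ℝ) {v w : V} (h : G.Adj v w) :
    |x v - x w| ≤ tvNorm G x := by
  classical
  have hvw : (v, w) ≠ (w, v) := fun he => h.ne (congrArg Prod.fst he)
  have hpair := sum_le_sum_of_subset_of_nonneg (subset_univ {(v, w), (w, v)})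
    fun (p : V × V) _ _ =>
      (by split_ifs <;> positivity : (0 : ℝ) ≤ if G.Adj p.1 p.2 then |x p.2 - x p.1| else 0)
  rw [sum_pair hvw, ← univ_product_univ, sum_product] at hpair
  simp only [h, h.symm, if_true] at hpair
  unfold tvNorm
  linarith [abs_sub_comm (x v) (x w)]

lemma abs_sub_le_length_mul_tvNorm (x : V → ℝ) {v w : V} (p : G.Walk v w) :
    |x v - x w| ≤ p.length * tvNorm G x := by
  induction p with
  | nil => simp
  | @cons u m w h q ih =>
    calc |x u - x w| ≤ |x u - x m| + |x m - x w| := abs_sub_le _ _ _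
      _ ≤ tvNorm G x + q.length * tvNorm G x :=
          add_le_add (abs_sub_le_tvNorm_of_adj G x h) ih
      _ = (q.cons h).length * tvNorm G x := by
          rw [SimpleGraph.Walk.length_cons]; push_cast; ring

lemma abs_sub_le_card_mul_tvNorm (hG : G.Preconnected) (x : V → ℝ) (v w : V) :
    |x v - x w| ≤ Fintype.card V * tvNorm G x := by
  classical
  let p := (hG v w).some.toPath
  calc |x v - x w| ≤ (p : G.Walk v w).length * tvNorm G x :=
        abs_sub_le_length_mul_tvNorm G x _
    _ ≤ Fintype.card V * tvNorm G x := by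
        gcongr
        · exact tvNorm_nonneg G x
        · exact p.2.length_lt.le

lemma abs_le_card_mul_tvNorm_of_sum_eq_zero (hG : G.Preconnected) {x : V → ℝ}
    (hx : ∑ v, x v = 0) (v : V) : |x v| ≤ Fintype.card V * tvNorm G x := by
  have hne : (univ : Finset V).Nonempty := ⟨v, mem_univ v⟩
  obtain ⟨w, -, hw⟩ := exists_le_of_sum_le hne (f := x) (g := fun _ => 0) (by simp [hx])
  obtain ⟨w', -, hw'⟩ := exists_le_of_sum_le hne (f := fun _ => 0) (g := x) (by simp [hx])
  have h₁ := abs_le.mp (abs_sub_le_card_mul_tvNorm G hG x v w)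
  have h₂ := abs_le.mp (abs_sub_le_card_mul_tvNorm G hG x w' v)
  rw [abs_le]
  constructor <;> linarith [h₁.2, h₂.2]

lemma eq_of_tvNorm_eq_zero (hG : G.Preconnected) {x : V → ℝ} (h : tvNorm G x = 0)
    (v w : V) : x v = x w := by
  have := abs_sub_le_card_mul_tvNorm G hG x v w
  rw [h, mul_zero] at this
  exact sub_eq_zero.mp (abs_nonpos_iff.mp this)

end TotalVariation

section DualNorm

variable {V : Type*} [Fintype V] {G : SimpleGraph V} [DecidableRel G.Adj]

lemma bddAbove_dualNorm_set (hG : G.Preconnected) (u : V → ℝ) :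
    BddAbove {r | ∃ x : V → ℝ, (∑ v, x v = 0) ∧ tvNorm G x ≤ 1 ∧ r = ∑ v, x v * u v} := by
  refine ⟨Fintype.card V * ∑ v, |u v|, ?_⟩
  rintro r ⟨x, hx, htv, rfl⟩
  rw [mul_sum]
  refine sum_le_sum fun v _ => ?_
  calc x v * u v ≤ |x v| * |u v| := by rw [← abs_mul]; exact le_abs_self _
    _ ≤ Fintype.card V * |u v| := by
        gcongr
        calc |x v| ≤ Fintype.card V * tvNorm G x :=
              abs_le_card_mul_tvNorm_of_sum_eq_zero G hG hx v
          _ ≤ Fintype.card V * 1 := by gcongr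
          _ = Fintype.card V := mul_one _

/-- Since `∑ u = 0`, `x` and `x - x̄` pair identically with `u`, so `x` need not have the zero
mean required in `dualNorm`. -/
lemma sum_mul_le_dualNorm_mul_tvNorm (hG : G.Preconnected) {u : V → ℝ}
    (hu : ∑ v, u v = 0) (x : V → ℝ) :
    ∑ v, x v * u v ≤ dualNorm G u * tvNorm G x := by
  rcases (tvNorm_nonneg G x).eq_or_lt with h0 | hpos
  · suffices ∑ v, x v * u v = 0 by rw [this, ← h0, mul_zero]
    rcases isEmpty_or_nonempty V with _ | ⟨⟨v₀⟩⟩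
    · simp
    · simp only [fun v => eq_of_tvNorm_eq_zero G hG h0.symm v v₀, ← mul_sum, hu, mul_zero]
  · set xbar := (∑ w, x w) / (Fintype.card V : ℝ)
    set z : V → ℝ := fun v => (tvNorm G x)⁻¹ * (x v - xbar)
    have hz : ∑ v, z v = 0 := by rw [← mul_sum, sum_sub_mean_eq_zero, mul_zero]
    have hztv : tvNorm G z ≤ 1 := by
      rw [tvNorm_const_mul, tvNorm_sub_const, abs_inv, abs_of_pos hpos, inv_mul_cancel₀ hpos.ne']
    have hzu : ∑ v, z v * u v = (∑ v, x v * u v) / tvNorm G x := by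
      simp only [z, mul_assoc, ← mul_sum, sub_mul, sum_sub_distrib, hu]
      field_simp
      ring
    rw [← div_le_iff₀ hpos, ← hzu]
    exact le_csSup (bddAbove_dualNorm_set hG u) ⟨z, hz, hztv, rfl⟩

end DualNorm

lemma stubbornTarget_subgradient (m a : ℝ) {lam : ℝ} (hlam : 0 ≤ lam) (k : ℕ) (c : ℝ) :
    lam * k * |stubbornTarget m lam a k - a|
        + (m - stubbornTarget m lam a k) * (c - stubbornTarget m lam a k)
      ≤ lam * k * |c - a| := by
  have ht : 0 ≤ lam * k := by positivity
  unfold stubbornTarget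
  split_ifs with h₁ h₂
  · rw [sub_self, abs_zero, mul_zero, zero_add]
    calc (m - a) * (c - a) ≤ |m - a| * |c - a| := by rw [← abs_mul]; exact le_abs_self _
      _ ≤ lam * k * |c - a| := by gcongr
  · rw [abs_of_neg (by linarith)]
    nlinarith [neg_abs_le (c - a)]
  · rw [abs_of_pos (by cases abs_cases (m - a) <;> linarith)]
    nlinarith [le_abs_self (c - a)]

lemma stubbornObjective_target_add_le {R : Type*} [Fintype R] {G : SimpleGraph R}
    [DecidableRel G.Adj] (hG : G.Preconnected) (x₀ : R → ℝ) (a : ℝ) {lam : ℝ} (k : ℕ)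
    (hlam₀ : 0 ≤ lam)
    (hlam : dualNorm G (fun v => x₀ v - (∑ w, x₀ w) / (Fintype.card R : ℝ)) ≤ lam)
    (x : R → ℝ) :
    stubbornObjective G x₀ lam a k
          (fun _ => stubbornTarget ((∑ w, x₀ w) / (Fintype.card R : ℝ)) lam a k)
        + (1 / 2) * ∑ v, (x v - stubbornTarget ((∑ w, x₀ w) / (Fintype.card R : ℝ)) lam a k) ^ 2
      ≤ stubbornObjective G x₀ lam a k x := by
  set m := (∑ w, x₀ w) / (Fintype.card R : ℝ)
  set T := stubbornTarget m lam a k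
  set u : R → ℝ := fun v => x₀ v - m
  have hu : ∑ v, u v = 0 := sum_sub_mean_eq_zero x₀
  have hdual : ∑ v, x v * u v ≤ lam * tvNorm G x :=
    (sum_mul_le_dualNorm_mul_tvNorm hG hu x).trans
      (mul_le_mul_of_nonneg_right hlam (tvNorm_nonneg G x))
  -- expand `(x - x₀)² = (T - x₀)² + (x - T)² + 2 (x - T)(T - x₀)` and split `T - x₀ = (T - m) - u`
  have hpoint (v : R) : (1 / 2) * (T - x₀ v) ^ 2 + lam * k * |T - a| + (1 / 2) * (x v - T) ^ 2
      ≤ (1 / 2) * (x v - x₀ v) ^ 2 + lam * k * |x v - a| + x v * u v - T * u v := by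
    have := stubbornTarget_subgradient m a hlam₀ k (x v)
    simp only [u]
    linarith
  have hsum := sum_le_sum fun v (_ : v ∈ univ) => hpoint v
  simp only [sum_add_distrib, sum_sub_distrib, ← mul_sum, sum_const, card_univ,
    nsmul_eq_mul, hu, mul_zero, sub_zero] at hsum
  unfold stubbornObjective
  rw [tvNorm_const, sum_const, card_univ, nsmul_eq_mul]
  linarith

/-- Robustness of TV consensus to stubborn agents: if
`λ ≥ ‖x₀ - x̄₀ 1‖_*` then the constant vector `x* 1` (with `x*` as above) is
the unique minimizer of the perturbed objective. -/
theorem stubborn_robustness {R : Type*} [Fintype R]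
    (G : SimpleGraph R) [DecidableRel G.Adj] (hG : G.Connected)
    (x₀ : R → ℝ) (a lam : ℝ) (k : ℕ) (hlampos : 0 < lam)
    (hlam : dualNorm G (fun v => x₀ v - (∑ w, x₀ w) / (Fintype.card R : ℝ)) ≤ lam) :
    ∀ x : R → ℝ,
      x ≠ (fun _ => stubbornTarget ((∑ w, x₀ w) / (Fintype.card R : ℝ)) lam a k) →
      stubbornObjective G x₀ lam a k
          (fun _ => stubbornTarget ((∑ w, x₀ w) / (Fintype.card R : ℝ)) lam a k)
        < stubbornObjective G x₀ lam a k x := by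
  intro x hx
  obtain ⟨v, hv⟩ := Function.ne_iff.mp hx
  have hdist : 0 < ∑ v, (x v - stubbornTarget ((∑ w, x₀ w) / (Fintype.card R : ℝ)) lam a k) ^ 2 :=
    sum_pos' (fun _ _ => sq_nonneg _) ⟨v, mem_univ v, sq_pos_of_ne_zero (sub_ne_zero.mpr hv)⟩
  linarith [stubbornObjective_target_add_le hG.preconnected x₀ a k hlampos.le hlam x]
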